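/- Fix 0 ≤ t < T₀ ≤ T and μ ∈ 𝒫₀(𝕊). For any α*, α̃* ∈ 𝒜_state, set α̂* := α* ⊕_{T₀} α̃* and ψ(y,ν) := J(T₀,ν,α̃*;y,α̃*). Then α̂* ∈ ℳ_state(t,μ) if and only if α* ∈ ℳ_state(T₀,ψ;t,μ) and α̃* ∈ ℳ_state(T₀, μ^{α*}_{T₀}). -/

import Mathlib

/-!
Statement 0 (Proposition 2.3, time consistency of state-dependent MFE).

Discrete-time finite-state mean field game.  Time set `𝕋 = {0,…,T}` (we use `ℕ` and
restrict attention to times `≤ T`), finite state space `S`, control set `A`.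
Probability measures on `S` are encoded as functions `S → ℝ` satisfying `IsProb`.
-/

open Finset

namespace MFGSetValue

variable {S A : Type*} [Fintype S] [DecidableEq S]

/-- A probability vector on the finite state space `S`. -/
def IsProb (μ : S → ℝ) : Prop := (∀ x, 0 ≤ μ x) ∧ ∑ x, μ x = 1

/-- The measure flow `μ^α` determined by `ℙ^{t,μ,α}`:
`μ^α_t = μ` and `μ^α_{s+1}(y) = ∑_x μ^α_s(x) q(s,x,μ^α_s,α(s,x);y)`.
(For `s < t` the value is irrelevant; we set it to `μ`.) -/
noncomputable def flow (q : ℕ → S → (S → ℝ) → A → S → ℝ) (α : ℕ → S → A)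
    (t : ℕ) (μ : S → ℝ) : ℕ → S → ℝ
  | 0 => μ
  | s + 1 =>
    if s + 1 ≤ t then μ
    else fun y => ∑ x, flow q α t μ s x * q s x (flow q α t μ s) (α s x) y

/-- The law at each time of the Markov chain `ℙ^{{ν_·}; t, x₀, α̃}` started from `x₀`
at time `t`, moving with transitions `q(s, ·, ν_s, α̃(s,·); ·)`. -/
noncomputable def chain (q : ℕ → S → (S → ℝ) → A → S → ℝ) (ν : ℕ → S → ℝ)
    (αt : ℕ → S → A) (t : ℕ) (x₀ : S) : ℕ → S → ℝ
  | 0 => fun x => if x = x₀ then 1 else 0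
  | s + 1 =>
    if s + 1 ≤ t then fun x => if x = x₀ then 1 else 0
    else fun y => ∑ x, chain q ν αt t x₀ s x * q s x (ν s) (αt s x) y

/-- The cost `J(T₀, ψ; {ν_·}; t, x₀, α̃)` with horizon `T₀`, terminal reward `ψ(X_{T₀}, ν_{T₀})`,
running cost `F`, against the measure flow `ν`:
`E[ψ(X_{T₀}, ν_{T₀}) + ∑_{s=t}^{T₀-1} F(s, X_s, ν_s, α̃(s,X_s))]`. -/
noncomputable def cost (q : ℕ → S → (S → ℝ) → A → S → ℝ)
    (F : ℕ → S → (S → ℝ) → A → ℝ) (T₀ : ℕ) (ψ : S → (S → ℝ) → ℝ)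
    (ν : ℕ → S → ℝ) (t : ℕ) (x₀ : S) (αt : ℕ → S → A) : ℝ :=
  (∑ x, chain q ν αt t x₀ T₀ x * ψ x (ν T₀)) +
    ∑ s ∈ Finset.Ico t T₀, ∑ x, chain q ν αt t x₀ s x * F s x (ν s) (αt s x)

/-- The value `v(T₀,ψ; {ν_·}; t, x₀) = inf_{α̃ ∈ 𝒜_state} J(T₀,ψ;{ν_·};t,x₀,α̃)`. -/
noncomputable def value (q : ℕ → S → (S → ℝ) → A → S → ℝ)
    (F : ℕ → S → (S → ℝ) → A → ℝ) (T₀ : ℕ) (ψ : S → (S → ℝ) → ℝ)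
    (ν : ℕ → S → ℝ) (t : ℕ) (x₀ : S) : ℝ :=
  sInf { r : ℝ | ∃ αt : ℕ → S → A, r = cost q F T₀ ψ ν t x₀ αt }

/-- `α ∈ ℳ_state(T₀, ψ; t, μ)`: a state-dependent MFE for the game on `{t,…,T₀}` with
terminal cost `ψ`.  (Taking `T₀ = T`, `ψ = G` gives `ℳ_state(t,μ)`.) -/
def isMFE (q : ℕ → S → (S → ℝ) → A → S → ℝ) (F : ℕ → S → (S → ℝ) → A → ℝ)
    (T₀ : ℕ) (ψ : S → (S → ℝ) → ℝ) (t : ℕ) (μ : S → ℝ) (α : ℕ → S → A) : Prop :=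
  ∀ x, cost q F T₀ ψ (flow q α t μ) t x α = value q F T₀ ψ (flow q α t μ) t x

/-- Concatenation `α ⊕_{T₀} α'`. -/
def concat (T₀ : ℕ) (α α' : ℕ → S → A) : ℕ → S → A :=
  fun s x => if s < T₀ then α s x else α' s x

end MFGSetValue

/-!
Against the fixed population flow `ν` of `α* ⊕_{T₀} α̃*` each player faces a finite-horizon
Markov decision problem, and the flows of `α*` and `α̃*` coincide with `ν` on `[t, T₀]` and
`[T₀, T]`. By the Chapman–Kolmogorov equation the cost from `t` is the cost up to `T₀` plus the
expected cost-to-go from `T₀`; hence optimality on `[t, T₀]` against that cost-to-go, together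
with optimality from every state at `T₀`, gives optimality from `t`. Conversely, comparing with
`γ ⊕_{T₀} α̃*` gives optimality on `[t, T₀]`; and since transitions charge every state, every
state has positive probability at time `T₀`, so the one-shot deviation principle propagates
optimality backward from `T` to every state at `T₀`.
-/

namespace MFGSetValue

variable {S A : Type*}

theorem concat_of_lt {T₀ s : ℕ} (α α' : ℕ → S → A) (h : s < T₀) : concat T₀ α α' s = α s := by
  funext x; exact if_pos h

theorem concat_of_le {T₀ s : ℕ} (α α' : ℕ → S → A) (h : T₀ ≤ s) : concat T₀ α α' s = α' s := by
  funext x; exact if_neg (Nat.not_lt.mpr h)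

variable [Fintype S]

theorem IsProb.le_sum_mul {p f : S → ℝ} {m : ℝ} (hp : IsProb p) (h : ∀ x, m ≤ f x) :
    m ≤ ∑ x, p x * f x :=
  calc m = ∑ x, p x * m := by rw [← Finset.sum_mul, hp.2, one_mul]
    _ ≤ ∑ x, p x * f x := Finset.sum_le_sum fun x _ => mul_le_mul_of_nonneg_left (h x) (hp.1 x)

theorem IsProb.sum_mul_pos {p f : S → ℝ} (hp : IsProb p) (h : ∀ x, 0 < f x) :
    0 < ∑ x, p x * f x := by
  obtain ⟨x, -, hx⟩ := Finset.exists_ne_zero_of_sum_ne_zero (hp.2.symm ▸ one_ne_zero)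
  exact Finset.sum_pos' (fun y _ => mul_nonneg (hp.1 y) (h y).le)
    ⟨x, Finset.mem_univ x, mul_pos (lt_of_le_of_ne (hp.1 x) (Ne.symm hx)) (h x)⟩

theorem IsProb.bind {p : S → ℝ} {k : S → S → ℝ} (hp : IsProb p) (hk : ∀ x, IsProb (k x)) :
    IsProb fun y => ∑ x, p x * k x y := by
  refine ⟨fun y => Finset.sum_nonneg fun x _ => mul_nonneg (hp.1 x) ((hk x).1 y), ?_⟩
  rw [Finset.sum_comm]
  simp_rw [← Finset.mul_sum, (hk _).2, mul_one]
  exact hp.2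

structure IsPositiveKernel (q : ℕ → S → (S → ℝ) → A → S → ℝ) : Prop where
  pos : ∀ s x μ a y, IsProb μ → 0 < q s x μ a y
  sum_eq_one : ∀ s x μ a, IsProb μ → ∑ y, q s x μ a y = 1

theorem IsPositiveKernel.isProb {q : ℕ → S → (S → ℝ) → A → S → ℝ} (hq : IsPositiveKernel q)
    {μ : S → ℝ} (hμ : IsProb μ) (s : ℕ) (x : S) (a : A) : IsProb (q s x μ a) :=
  ⟨fun y => (hq.pos s x μ a y hμ).le, hq.sum_eq_one s x μ a hμ⟩

section Flow

variable {q : ℕ → S → (S → ℝ) → A → S → ℝ} {α β : ℕ → S → A} {μ : S → ℝ} {t : ℕ}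

theorem flow_of_le {s : ℕ} (h : s ≤ t) : flow q α t μ s = μ := by
  cases s with
  | zero => rfl
  | succ s => exact if_pos h

theorem flow_succ {s : ℕ} (h : t ≤ s) :
    flow q α t μ (s + 1) = fun y => ∑ x, flow q α t μ s x * q s x (flow q α t μ s) (α s x) y :=
  if_neg (by omega)

theorem flow_isProb (hq : IsPositiveKernel q) (hμ : IsProb μ) (r : ℕ) :
    IsProb (flow q α t μ r) := by
  induction r with
  | zero => exact hμ
  | succ r ih =>
    rcases le_or_gt t r with h | h
    · rw [flow_succ h]; exact ih.bind fun x => hq.isProb ih r x _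
    · rwa [flow_of_le h]

theorem flow_congr {r : ℕ} (h : ∀ s, t ≤ s → s < r → α s = β s) :
    flow q α t μ r = flow q β t μ r := by
  induction r with
  | zero => rfl
  | succ r ih =>
    rcases le_or_gt t r with htr | htr
    · rw [flow_succ htr, flow_succ htr, ih fun s hs hsr => h s hs (by omega),
        h r htr r.lt_succ_self]
    · rw [flow_of_le htr, flow_of_le htr]

theorem flow_concat {T₀ r : ℕ} (htT₀ : t ≤ T₀) (hr : T₀ ≤ r) :
    flow q β T₀ (flow q α t μ T₀) r = flow q (concat T₀ α β) t μ r := by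
  induction r, hr using Nat.le_induction with
  | base => exact (flow_of_le le_rfl).trans (flow_congr fun s _ hs => (concat_of_lt α β hs).symm)
  | succ r hr ih => rw [flow_succ hr, flow_succ (htT₀.trans hr), ih, concat_of_le α β hr]

end Flow

variable [DecidableEq S]

theorem isProb_ite_eq (x₀ : S) : IsProb fun x : S => if x = x₀ then (1 : ℝ) else 0 :=
  ⟨fun x => by by_cases h : x = x₀ <;> simp [h], by simp⟩

section Chain

variable {q : ℕ → S → (S → ℝ) → A → S → ℝ} {ν ν' : ℕ → S → ℝ} {β β' : ℕ → S → A} {t : ℕ}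
  {x₀ : S}

theorem chain_of_le {s : ℕ} (h : s ≤ t) :
    chain q ν β t x₀ s = fun x => if x = x₀ then (1 : ℝ) else 0 := by
  cases s with
  | zero => rfl
  | succ s => exact if_pos h

theorem chain_succ {s : ℕ} (h : t ≤ s) :
    chain q ν β t x₀ (s + 1) = fun y => ∑ x, chain q ν β t x₀ s x * q s x (ν s) (β s x) y :=
  if_neg (by omega)

theorem chain_succ_self : chain q ν β t x₀ (t + 1) = q t x₀ (ν t) (β t x₀) := by
  funext y
  simp [chain_succ le_rfl, chain_of_le le_rfl, ite_mul]

theorem sum_chain_succ_mul {s : ℕ} (h : t ≤ s) (f : S → ℝ) :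
    ∑ y, chain q ν β t x₀ (s + 1) y * f y
      = ∑ x, chain q ν β t x₀ s x * ∑ y, q s x (ν s) (β s x) y * f y := by
  simp_rw [chain_succ h, Finset.sum_mul, Finset.mul_sum, mul_assoc]
  exact Finset.sum_comm

theorem chain_isProb (hq : IsPositiveKernel q) (hν : ∀ s, IsProb (ν s)) (r : ℕ) :
    IsProb (chain q ν β t x₀ r) := by
  induction r with
  | zero => exact isProb_ite_eq x₀
  | succ r ih =>
    rcases le_or_gt t r with h | h
    · rw [chain_succ h]; exact ih.bind fun x => hq.isProb (hν r) r x _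
    · rw [chain_of_le h]; exact isProb_ite_eq x₀

theorem chain_pos (hq : IsPositiveKernel q) (hν : ∀ s, IsProb (ν s)) {r : ℕ} (h : t < r)
    (y : S) : 0 < chain q ν β t x₀ r y := by
  obtain ⟨r, rfl⟩ := Nat.exists_eq_add_of_lt h
  rw [chain_succ (Nat.le_add_right t r)]
  exact (chain_isProb hq hν _).sum_mul_pos fun x => hq.pos _ x _ _ y (hν _)

theorem chain_congr {r : ℕ} (hν : ∀ s, t ≤ s → s < r → ν s = ν' s)
    (hβ : ∀ s, t ≤ s → s < r → β s = β' s) :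
    chain q ν β t x₀ r = chain q ν' β' t x₀ r := by
  induction r with
  | zero => rfl
  | succ r ih =>
    rcases le_or_gt t r with htr | htr
    · rw [chain_succ htr, chain_succ htr, ih (fun s hs hsr => hν s hs (by omega))
        (fun s hs hsr => hβ s hs (by omega)), hν r htr r.lt_succ_self, hβ r htr r.lt_succ_self]
    · rw [chain_of_le htr, chain_of_le htr]

/-- Chapman–Kolmogorov equation. -/
theorem sum_chain_mul_eq_sum_chain_mul_sum_chain {T₀ r : ℕ} (htT₀ : t ≤ T₀) (hr : T₀ ≤ r)
    (f : S → ℝ) :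
    ∑ y, chain q ν β t x₀ r y * f y
      = ∑ z, chain q ν β t x₀ T₀ z * ∑ y, chain q ν β T₀ z r y * f y := by
  induction r, hr using Nat.le_induction generalizing f with
  | base => simp [chain_of_le le_rfl (t := T₀), ite_mul]
  | succ r hr ih =>
    simp_rw [sum_chain_succ_mul (htT₀.trans hr), sum_chain_succ_mul hr, ih]

end Chain

section Cost

variable {q : ℕ → S → (S → ℝ) → A → S → ℝ} {F : ℕ → S → (S → ℝ) → A → ℝ}
  {ψ ψ' : S → (S → ℝ) → ℝ} {ν ν' : ℕ → S → ℝ} {β β' γ : ℕ → S → A} {t T₀ T' : ℕ} {x : S}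

theorem cost_self : cost q F T₀ ψ ν T₀ x β = ψ x (ν T₀) := by
  simp [cost, chain_of_le le_rfl, ite_mul]

theorem cost_congr (hν : ∀ s, t ≤ s → s ≤ T₀ → ν s = ν' s)
    (hβ : ∀ s, t ≤ s → s < T₀ → β s = β' s) (hψ : ∀ y, ψ y (ν T₀) = ψ' y (ν' T₀)) :
    cost q F T₀ ψ ν t x β = cost q F T₀ ψ' ν' t x β' := by
  have hchain : ∀ r ≤ T₀, chain q ν β t x r = chain q ν' β' t x r := fun r hr =>
    chain_congr (fun s hs hsr => hν s hs (by omega)) (fun s hs hsr => hβ s hs (by omega))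
  unfold cost
  congr 1
  · simp_rw [hchain T₀ le_rfl, hψ]
  · refine Finset.sum_congr rfl fun s hs => ?_
    obtain ⟨h₁, h₂⟩ := Finset.mem_Ico.mp hs
    rw [hchain s h₂.le, hν s h₁ h₂.le, hβ s h₁ h₂]

theorem cost_sub_cost (φ φ' : S → (S → ℝ) → ℝ) :
    cost q F T₀ φ' ν t x β - cost q F T₀ φ ν t x β
      = ∑ z, chain q ν β t x T₀ z * (φ' z (ν T₀) - φ z (ν T₀)) := by
  simp only [cost, mul_sub, Finset.sum_sub_distrib]
  ring

theorem cost_mono_terminal (hq : IsPositiveKernel q) (hν : ∀ s, IsProb (ν s))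
    (h : ∀ z, ψ z (ν T₀) ≤ ψ' z (ν T₀)) :
    cost q F T₀ ψ ν t x β ≤ cost q F T₀ ψ' ν t x β := by
  rw [← sub_nonneg, cost_sub_cost]
  exact Finset.sum_nonneg fun z _ =>
    mul_nonneg ((chain_isProb hq hν T₀).1 z) (sub_nonneg.mpr (h z))

theorem cost_split (htT₀ : t ≤ T₀) (hT₀T' : T₀ ≤ T') :
    cost q F T' ψ ν t x β = cost q F T₀ (fun z _ => cost q F T' ψ ν T₀ z β) ν t x β := by
  have tower := fun r (hr : T₀ ≤ r) =>
    sum_chain_mul_eq_sum_chain_mul_sum_chain (q := q) (ν := ν) (β := β) (x₀ := x) htT₀ hr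
  simp only [cost]
  rw [← Finset.sum_Ico_consecutive _ htT₀ hT₀T', tower T' hT₀T',
    Finset.sum_congr rfl fun s hs => tower s (Finset.mem_Ico.mp hs).1 _]
  simp only [mul_add, Finset.sum_add_distrib, Finset.mul_sum]
  rw [Finset.sum_comm (s := Finset.Ico T₀ T')]
  ring

theorem cost_concat (htT₀ : t ≤ T₀) (hT₀T' : T₀ ≤ T') :
    cost q F T' ψ ν t x (concat T₀ β γ)
      = cost q F T₀ (fun z _ => cost q F T' ψ ν T₀ z γ) ν t x β := by
  rw [cost_split htT₀ hT₀T']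
  exact cost_congr (fun _ _ _ => rfl) (fun s _ hs => concat_of_lt β γ hs)
    fun y => cost_congr (fun _ _ _ => rfl) (fun s hs _ => concat_of_le β γ hs) fun _ => rfl

theorem cost_succ {s : ℕ} (hs : s < T') :
    cost q F T' ψ ν s x β
      = F s x (ν s) (β s x) + ∑ y, q s x (ν s) (β s x) y * cost q F T' ψ ν (s + 1) y β := by
  rw [cost_split s.le_succ hs, cost, chain_succ_self, Nat.Ico_succ_singleton, Finset.sum_singleton,
    chain_of_le le_rfl]
  simp [ite_mul, add_comm]

theorem cost_update {s : ℕ} (hs : s < T') (z₀ : S) (a : A) :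
    cost q F T' ψ ν s x (Function.update β s (Function.update (β s) z₀ a))
      = F s x (ν s) (Function.update (β s) z₀ a x)
        + ∑ y, q s x (ν s) (Function.update (β s) z₀ a x) y * cost q F T' ψ ν (s + 1) y β := by
  rw [cost_succ hs, Function.update_self]
  congr 2
  funext y
  congr 1
  exact cost_congr (fun _ _ _ => rfl)
    (fun r hr _ => Function.update_of_ne (by omega) _ _) fun _ => rfl

end Cost

section Optimality

variable {q : ℕ → S → (S → ℝ) → A → S → ℝ} {F : ℕ → S → (S → ℝ) → A → ℝ}
  {ψ ψ' : S → (S → ℝ) → ℝ} {ν ν' : ℕ → S → ℝ} {β β' : ℕ → S → A} {t T₀ T' : ℕ} {x : S}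

def IsOptimal (q : ℕ → S → (S → ℝ) → A → S → ℝ) (F : ℕ → S → (S → ℝ) → A → ℝ) (T₀ : ℕ)
    (ψ : S → (S → ℝ) → ℝ) (ν : ℕ → S → ℝ) (t : ℕ) (x : S) (β : ℕ → S → A) : Prop :=
  ∀ γ, cost q F T₀ ψ ν t x β ≤ cost q F T₀ ψ ν t x γ

theorem bddBelow_cost (hq : IsPositiveKernel q) (hν : ∀ s, IsProb (ν s))
    (hF : ∀ s x (μ : S → ℝ), BddBelow (Set.range fun a : A => F s x μ a)) :
    BddBelow {r : ℝ | ∃ γ, r = cost q F T₀ ψ ν t x γ} := by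
  have lower : ∀ (f : S → ℝ) y, -∑ z, |f z| ≤ f y := fun f y =>
    (neg_le_neg (Finset.single_le_sum (fun z _ => abs_nonneg (f z)) (Finset.mem_univ y))).trans
      (neg_abs_le (f y))
  refine ⟨-∑ z, |ψ z (ν T₀)|
    + ∑ s ∈ Finset.Ico t T₀, -∑ z, |sInf (Set.range fun a => F s z (ν s) a)|, ?_⟩
  rintro _ ⟨γ, rfl⟩
  refine add_le_add ((chain_isProb hq hν T₀).le_sum_mul (lower _))
    (Finset.sum_le_sum fun s _ => (chain_isProb hq hν s).le_sum_mul fun y => ?_)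
  exact (lower _ y).trans (csInf_le (hF s y (ν s)) ⟨γ s y, rfl⟩)

theorem cost_eq_value_iff (hq : IsPositiveKernel q) (hν : ∀ s, IsProb (ν s))
    (hF : ∀ s x (μ : S → ℝ), BddBelow (Set.range fun a : A => F s x μ a)) :
    cost q F T₀ ψ ν t x β = value q F T₀ ψ ν t x ↔ IsOptimal q F T₀ ψ ν t x β := by
  constructor
  · intro h γ
    exact h ▸ csInf_le (bddBelow_cost hq hν hF) ⟨γ, rfl⟩
  · intro h
    exact le_antisymm (le_csInf ⟨_, β, rfl⟩ (by rintro _ ⟨γ, rfl⟩; exact h γ))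
      (csInf_le (bddBelow_cost hq hν hF) ⟨β, rfl⟩)

theorem isMFE_iff {μ : S → ℝ} {α : ℕ → S → A} (hq : IsPositiveKernel q) (hμ : IsProb μ)
    (hF : ∀ s x (μ : S → ℝ), BddBelow (Set.range fun a : A => F s x μ a)) :
    isMFE q F T₀ ψ t μ α ↔ ∀ x, IsOptimal q F T₀ ψ (flow q α t μ) t x α :=
  forall_congr' fun _ => cost_eq_value_iff hq (flow_isProb hq hμ) hF

theorem isOptimal_congr (hν : ∀ s, t ≤ s → s ≤ T₀ → ν s = ν' s)
    (hβ : ∀ s, t ≤ s → s < T₀ → β s = β' s) (hψ : ∀ y, ψ y (ν T₀) = ψ' y (ν' T₀)) :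
    IsOptimal q F T₀ ψ ν t x β ↔ IsOptimal q F T₀ ψ' ν' t x β' := by
  simp only [IsOptimal, cost_congr hν hβ hψ, cost_congr hν (fun _ _ _ => rfl) hψ]

theorem isOptimal_self : IsOptimal q F T₀ ψ ν T₀ x β := fun _ => by
  rw [cost_self, cost_self]

/-- One-shot deviation principle. -/
theorem isOptimal_of_succ {s : ℕ} (hq : IsPositiveKernel q) (hν : ∀ s, IsProb (ν s))
    (hs : s < T') (hnext : ∀ y, IsOptimal q F T' ψ ν (s + 1) y β)
    (hstep : ∀ a, cost q F T' ψ ν s x β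
      ≤ F s x (ν s) a + ∑ y, q s x (ν s) a y * cost q F T' ψ ν (s + 1) y β) :
    IsOptimal q F T' ψ ν s x β := fun γ =>
  calc cost q F T' ψ ν s x β
      ≤ F s x (ν s) (γ s x) + ∑ y, q s x (ν s) (γ s x) y * cost q F T' ψ ν (s + 1) y β :=
        hstep _
    _ ≤ F s x (ν s) (γ s x) + ∑ y, q s x (ν s) (γ s x) y * cost q F T' ψ ν (s + 1) y γ := by
        gcongr with y
        · exact (hq.pos _ _ _ _ y (hν s)).le
        · exact hnext y γ
    _ = cost q F T' ψ ν s x γ := (cost_succ hs).symm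

theorem IsOptimal.sum_chain_mul_sub_nonneg {s : ℕ} (h : IsOptimal q F T' ψ ν t x β)
    (hts : t ≤ s) (hsT' : s ≤ T') (γ : ℕ → S → A) :
    0 ≤ ∑ z, chain q ν β t x s z * (cost q F T' ψ ν s z γ - cost q F T' ψ ν s z β) := by
  rw [← cost_sub_cost (F := F) (fun z _ => cost q F T' ψ ν s z β)
    (fun z _ => cost q F T' ψ ν s z γ), ← cost_concat hts hsT', ← cost_split hts hsT', sub_nonneg]
  exact h _

/-- Every state carries positive mass after time `t`, so a profitable one-step deviation at
some `(s, z)` would also improve on `β` from `(t, x)`. -/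
theorem IsOptimal.of_lt {s : ℕ} (hq : IsPositiveKernel q) (hν : ∀ s, IsProb (ν s))
    (h : IsOptimal q F T' ψ ν t x β) (hts : t < s) (hsT' : s ≤ T') (z : S) :
    IsOptimal q F T' ψ ν s z β := by
  induction hsT' using Nat.decreasingInduction generalizing z with
  | self => exact isOptimal_self
  | of_succ s hs ih =>
    refine isOptimal_of_succ hq hν hs (ih (by omega)) fun a => ?_
    have hdev := h.sum_chain_mul_sub_nonneg hts.le hs.le
      (Function.update β s (Function.update (β s) z a))
    rw [Finset.sum_eq_single z (fun y _ hyz => by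
        rw [cost_update hs, Function.update_of_ne hyz, ← cost_succ hs, sub_self, mul_zero])
      (by simp), cost_update hs, Function.update_self] at hdev
    exact sub_nonneg.mp (nonneg_of_mul_nonneg_right hdev (chain_pos hq hν hts z))

theorem IsOptimal.truncate (h : IsOptimal q F T' ψ ν t x β) (htT₀ : t ≤ T₀) (hT₀T' : T₀ ≤ T') :
    IsOptimal q F T₀ (fun z _ => cost q F T' ψ ν T₀ z β) ν t x β := fun γ => by
  rw [← cost_split htT₀ hT₀T', ← cost_concat htT₀ hT₀T']
  exact h _

theorem forall_isOptimal_iff (hq : IsPositiveKernel q) (hν : ∀ s, IsProb (ν s))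
    (htT₀ : t < T₀) (hT₀T' : T₀ ≤ T') :
    (∀ x, IsOptimal q F T' ψ ν t x β) ↔
      (∀ x, IsOptimal q F T₀ (fun z _ => cost q F T' ψ ν T₀ z β) ν t x β) ∧
        ∀ z, IsOptimal q F T' ψ ν T₀ z β := by
  refine ⟨fun h => ⟨fun x => (h x).truncate htT₀.le hT₀T',
    fun z => (h z).of_lt hq hν htT₀ hT₀T' z⟩, fun ⟨hhead, htail⟩ x γ => ?_⟩
  calc cost q F T' ψ ν t x β
      = cost q F T₀ (fun z _ => cost q F T' ψ ν T₀ z β) ν t x β := cost_split htT₀.le hT₀T'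
    _ ≤ cost q F T₀ (fun z _ => cost q F T' ψ ν T₀ z β) ν t x γ := hhead x γ
    _ ≤ cost q F T₀ (fun z _ => cost q F T' ψ ν T₀ z γ) ν t x γ :=
        cost_mono_terminal hq hν fun z => htail z γ
    _ = cost q F T' ψ ν t x γ := (cost_split htT₀.le hT₀T').symm

end Optimality

end MFGSetValue

open MFGSetValue

theorem mfe_time_consistency_general
    {S A : Type*} [Fintype S] [DecidableEq S]
    (T : ℕ) (q : ℕ → S → (S → ℝ) → A → S → ℝ)
    (F : ℕ → S → (S → ℝ) → A → ℝ) (G : S → (S → ℝ) → ℝ)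
    (hq0 : ∀ s x μ a y, IsProb μ → 0 < q s x μ a y)
    (hqsum : ∀ s x μ a, IsProb μ → ∑ y, q s x μ a y = 1)
    (hF : ∀ s x (μ : S → ℝ), BddBelow (Set.range fun a : A => F s x μ a))
    (t T₀ : ℕ) (htT₀ : t < T₀) (hT₀T : T₀ ≤ T)
    (μ : S → ℝ) (hμ : IsProb μ)
    (αstar αtstar : ℕ → S → A) :
    isMFE q F T G t μ (concat T₀ αstar αtstar) ↔
      (isMFE q F T₀ (fun y ν => cost q F T G (flow q αtstar T₀ ν) T₀ y αtstar) t μ αstar ∧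
        isMFE q F T G T₀ (flow q αstar t μ T₀) αtstar) := by
  have hq : IsPositiveKernel q := ⟨hq0, hqsum⟩
  set ν := flow q (concat T₀ αstar αtstar) t μ
  have hhead : ∀ s, t ≤ s → s ≤ T₀ → flow q αstar t μ s = ν s := fun _ _ hs =>
    flow_congr fun _ _ hr => (concat_of_lt αstar αtstar (by omega)).symm
  have htail : ∀ s, T₀ ≤ s → s ≤ T → flow q αtstar T₀ (flow q αstar t μ T₀) s = ν s :=
    fun _ hs _ => flow_concat htT₀.le hs
  have htail_terminal (y : S) : G y (flow q αtstar T₀ (flow q αstar t μ T₀) T) = G y (ν T) := by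
    rw [htail T hT₀T le_rfl]
  have htail_cost (y : S) :
      cost q F T G (flow q αtstar T₀ (flow q αstar t μ T₀)) T₀ y αtstar
        = cost q F T G ν T₀ y (concat T₀ αstar αtstar) :=
    cost_congr htail (fun _ hs _ => (concat_of_le αstar αtstar hs).symm) htail_terminal
  rw [isMFE_iff hq hμ hF, isMFE_iff hq hμ hF, isMFE_iff hq (flow_isProb hq hμ T₀) hF,
    forall_isOptimal_iff hq (flow_isProb hq hμ) htT₀ hT₀T]
  exact and_congr
    (forall_congr' fun _ => (isOptimal_congr hhead
      (fun _ _ hs => (concat_of_lt αstar αtstar hs).symm) htail_cost).symm)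
    (forall_congr' fun _ => (isOptimal_congr htail
      (fun _ hs _ => (concat_of_le αstar αtstar hs).symm) htail_terminal).symm)

/-- Proposition 2.3.  Fix `0 ≤ t < T₀ ≤ T` and `μ ∈ 𝒫₀(𝕊)`.  For any
`α*, α̃* ∈ 𝒜_state`, set `α̂* := α* ⊕_{T₀} α̃*` and `ψ(y,ν) := J(T₀,ν,α̃*;y,α̃*)`.
Then `α̂* ∈ ℳ_state(t,μ)` iff `α* ∈ ℳ_state(T₀,ψ;t,μ)` and `α̃* ∈ ℳ_state(T₀, μ^{α*}_{T₀})`. -/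
theorem mfe_time_consistency
    {S A : Type*} [Fintype S] [DecidableEq S] [Nonempty A]
    (T : ℕ) (q : ℕ → S → (S → ℝ) → A → S → ℝ)
    (F : ℕ → S → (S → ℝ) → A → ℝ) (G : S → (S → ℝ) → ℝ)
    (hq0 : ∀ s x μ a y, IsProb μ → 0 < q s x μ a y)
    (hq1 : ∀ s x μ a y, IsProb μ → q s x μ a y < 1)
    (hqsum : ∀ s x μ a, IsProb μ → ∑ y, q s x μ a y = 1)
    (hF : ∀ s x (μ : S → ℝ), BddBelow (Set.range fun a : A => F s x μ a))
    (t T₀ : ℕ) (htT₀ : t < T₀) (hT₀T : T₀ ≤ T)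
    (μ : S → ℝ) (hμ : IsProb μ) (hμfull : ∀ x, 0 < μ x)
    (αstar αtstar : ℕ → S → A) :
    isMFE q F T G t μ (concat T₀ αstar αtstar) ↔
      (isMFE q F T₀ (fun y ν => cost q F T G (flow q αtstar T₀ ν) T₀ y αtstar) t μ αstar ∧
        isMFE q F T G T₀ (flow q αstar t μ T₀) αtstar) :=
  mfe_time_consistency_general T q F G hq0 hqsum hF t T₀ htT₀ hT₀T μ hμ αstar αtstar
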